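/- Fix a vertex x in a 3-edge-colored simple graph. Define S_x as the set of tuples (x1,x2,y,z,z1,z2) ∈ V^6 such that (x,x1,x2) and (z,z1,z2) both form rainbow triangles in order, {x,y} is a blue edge, and z ∈ {x,y}. Define T_x as the set of tuples (a,b1,b2,ℓ) with a a green neighbor of x, b1 and b2 blue neighbors of x, and ℓ a red edge. Then there exists an injection from S_x into T_x. -/
import Mathlib


def IsRed {V : Type*} (G : SimpleGraph V) (c : Sym2 V → Fin 3) (a b : V) : Prop :=
  G.Adj a b ∧ c s(a, b) = 0

def IsGreen {V : Type*} (G : SimpleGraph V) (c : Sym2 V → Fin 3) (a b : V) : Prop :=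
  G.Adj a b ∧ c s(a, b) = 1

def IsBlue {V : Type*} (G : SimpleGraph V) (c : Sym2 V → Fin 3) (a b : V) : Prop :=
  G.Adj a b ∧ c s(a, b) = 2

/-- `(p, q, r)` forms a rainbow triangle in order: `{p,q}` blue, `{q,r}` red, `{p,r}` green. -/
def InOrder {V : Type*} (G : SimpleGraph V) (c : Sym2 V → Fin 3) (p q r : V) : Prop :=
  IsBlue G c p q ∧ IsRed G c q r ∧ IsGreen G c p r

lemma blue_not_green {V : Type*} {G : SimpleGraph V} {c : Sym2 V → Fin 3} {w u : V}
    (hb : IsBlue G c w u) (hg : IsGreen G c w u) : False := by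
  have h1 := hb.2
  have h2 := hg.2
  rw [h1] at h2
  exact absurd h2 (by decide)

/-- For a tuple `(x1, x2, y, z, z1, z2) ∈ S_x`: `(x,x1,x2)` and `(z,z1,z2)` form rainbow
triangles in order, `{x,y}` is blue, and `z ∈ {x,y}`.  A tuple `(a, b1, b2, ℓ) ∈ T_x` has
`a` a green neighbor of `x`, `b1, b2` blue neighbors of `x`, and `ℓ` a red edge.
There is an injection from `S_x` into `T_x`. -/
theorem key_injection {V : Type*} (G : SimpleGraph V) (c : Sym2 V → Fin 3) (x : V)
    (Sx : Set (V × V × V × V × V × V)) (Tx : Set (V × V × V × Sym2 V))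
    (hS : Sx = {t | InOrder G c x t.1 t.2.1 ∧
      InOrder G c t.2.2.2.1 t.2.2.2.2.1 t.2.2.2.2.2 ∧
      IsBlue G c x t.2.2.1 ∧ (t.2.2.2.1 = x ∨ t.2.2.2.1 = t.2.2.1)})
    (hT : Tx = {t | IsGreen G c x t.1 ∧ IsBlue G c x t.2.1 ∧ IsBlue G c x t.2.2.1 ∧
      t.2.2.2 ∈ G.edgeSet ∧ c t.2.2.2 = 0}) :
    ∃ f : Sx → Tx, Function.Injective f := by
  classical
  -- The branch condition: z = x and the red edge {z1,z2} is y-orientable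
  let Cnd : V × V × V × V × V × V → Prop := fun t =>
    t.2.2.2.1 = x ∧ ∃ u v : V, (s(t.2.2.2.2.1, t.2.2.2.2.2) : Sym2 V) = s(u, v) ∧
      IsBlue G c t.2.2.1 u ∧ IsGreen G c t.2.2.1 v
  let F : V × V × V × V × V × V → V × V × V × Sym2 V := fun t =>
    if Cnd t then (t.2.2.2.2.2, t.2.2.1, t.2.2.2.2.1, s(t.1, t.2.1))
    else (t.2.1, t.1, t.2.2.1, s(t.2.2.2.2.1, t.2.2.2.2.2))
  have hmap : ∀ t ∈ Sx, F t ∈ Tx := by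
    rintro ⟨x1, x2, y, z, z1, z2⟩ ht
    rw [hS] at ht
    obtain ⟨h1, h2, h3, h4⟩ := ht
    dsimp only at h1 h2 h3 h4
    rw [hT]
    by_cases hc : Cnd (x1, x2, y, z, z1, z2)
    · have hz : z = x := hc.1
      subst hz
      simp only [F, if_pos hc]
      refine ⟨h2.2.2, h3, h2.1, ?_, h1.2.1.2⟩
      exact G.mem_edgeSet.mpr h1.2.1.1
    · simp only [F, if_neg hc]
      refine ⟨h1.2.2, h1.1, h3, ?_, h2.2.1.2⟩
      exact G.mem_edgeSet.mpr h2.2.1.1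
  have hinj : Set.InjOn F Sx := by
    rintro ⟨x1, x2, y, z, z1, z2⟩ ht ⟨x1', x2', y', z', z1', z2'⟩ ht' heq
    rw [hS] at ht ht'
    obtain ⟨h1, h2, h3, h4⟩ := ht
    obtain ⟨h1', h2', h3', h4'⟩ := ht'
    dsimp only at h1 h2 h3 h4 h1' h2' h3' h4'
    by_cases hc : Cnd (x1, x2, y, z, z1, z2) <;>
      by_cases hc' : Cnd (x1', x2', y', z', z1', z2')
    · -- both in branch 1
      simp only [F, if_pos hc, if_pos hc', Prod.mk.injEq] at heq
      obtain ⟨e1, e2, e3, e4⟩ := heq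
      have hz : z = x := hc.1
      have hz' : z' = x := hc'.1
      rcases Sym2.eq_iff.mp e4 with ⟨f1, f2⟩ | ⟨f1, f2⟩
      · simp [e1, e2, e3, f1, f2, hz, hz']
      · -- swapped: x1 = x2' gives blue = green, contradiction
        exfalso
        exact blue_not_green (f1 ▸ h1.1) h1'.2.2
    · -- branch 1 vs branch 2 : contradiction
      exfalso
      simp only [F, if_pos hc, if_neg hc', Prod.mk.injEq] at heq
      obtain ⟨e1, e2, e3, e4⟩ := heq
      -- image: (z2, y, z1, s(x1,x2)) = (x2', x1', y', s(z1',z2'))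
      -- so y = x1', z2 = x2'; but {x1',x2'} is red while {y,z2} is blue or green
      obtain ⟨-, u, v, huv, hbu, hgv⟩ := hc
      dsimp only at huv hbu hgv
      have hred : c s(x1', x2') = 0 := h1'.2.1.2
      rw [← e2, ← e1] at hred
      -- hred : c s(y, z2) = 0
      rcases Sym2.eq_iff.mp huv with ⟨f1, f2⟩ | ⟨f1, f2⟩
      · -- v = z2, so IsGreen y z2
        have := hgv.2
        rw [f2] at hred
        rw [hred] at this
        exact absurd this (by decide)
      · -- u = z2, so IsBlue y z2
        have := hbu.2
        rw [f2] at hred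
        rw [hred] at this
        exact absurd this (by decide)
    · -- branch 2 vs branch 1 : symmetric contradiction
      exfalso
      simp only [F, if_neg hc, if_pos hc', Prod.mk.injEq] at heq
      obtain ⟨e1, e2, e3, e4⟩ := heq
      obtain ⟨-, u, v, huv, hbu, hgv⟩ := hc'
      dsimp only at huv hbu hgv
      have hred : c s(x1, x2) = 0 := h1.2.1.2
      rw [e2, e1] at hred
      rcases Sym2.eq_iff.mp huv with ⟨f1, f2⟩ | ⟨f1, f2⟩
      · have := hgv.2
        rw [f2] at hred
        rw [hred] at this
        exact absurd this (by decide)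
      · have := hbu.2
        rw [f2] at hred
        rw [hred] at this
        exact absurd this (by decide)
    · -- both in branch 2
      simp only [F, if_neg hc, if_neg hc', Prod.mk.injEq] at heq
      obtain ⟨e1, e2, e3, e4⟩ := heq
      -- e1 : x2 = x2', e2 : x1 = x1', e3 : y = y', e4 : s(z1,z2) = s(z1',z2')
      -- first show z = z'
      have hzz : z = z' := by
        rcases h4 with hz | hz <;> rcases h4' with hz' | hz'
        · rw [hz, hz']
        · -- z = x, z' = y'; then t' witnesses y-orientability of the edge, contra ¬Cnd t
          exfalso
          apply hc
          refine ⟨hz, z1', z2', e4, ?_, ?_⟩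
          · rw [e3, ← hz']; exact h2'.1
          · rw [e3, ← hz']; exact h2'.2.2
        · -- z' = x, z = y : symmetric
          exfalso
          apply hc'
          refine ⟨hz', z1, z2, e4.symm, ?_, ?_⟩
          · rw [← e3, ← hz]; exact h2.1
          · rw [← e3, ← hz]; exact h2.2.2
        · rw [hz, hz', e3]
      -- now recover z1, z2 from the edge using uniqueness of z-orientation
      rcases Sym2.eq_iff.mp e4 with ⟨f1, f2⟩ | ⟨f1, f2⟩
      · simp [e1, e2, e3, f1, f2, hzz]
      · -- swapped: z1 = z2' gives blue = green from z = z', contradiction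
        exfalso
        have hb : IsBlue G c z' z1 := hzz ▸ h2.1
        exact blue_not_green hb (f1 ▸ h2'.2.2)
  refine ⟨fun t => ⟨F t.1, hmap t.1 t.2⟩, ?_⟩
  intro t t' h
  have : F t.1 = F t'.1 := congrArg Subtype.val h
  exact Subtype.ext (hinj t.2 t'.2 this)
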